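/- Let ε ∈ (0,1) and let q ∈ [1−ε, 1+ε]. Then for all real numbers t₁ ≥ 0 and t₂ ≥ 0, |Φ(t₁ + q·t₂) − Φ(t₁ + t₂)| ≤ ε / ((1−ε)·√(2πe)). -/

import Mathlib

/-! Both arguments `t₁ + q t₂` and `t₁ + t₂` are at least `m = (1 - ε) t₂ ≥ 0` and differ by at
most `ε t₂ = ε m / (1 - ε)`. On `[m, ∞)` the Gaussian density is at most `e^{-m²/2} / √(2π)`, so
the difference of the `Φ` values is at most `ε / (1 - ε) · m e^{-m²/2} / √(2π)`, and
`m e^{-m²/2} ≤ e^{-1/2}`. -/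

open MeasureTheory Real

/-- The standard normal cumulative distribution function. -/
noncomputable def Phi (t : ℝ) : ℝ :=
  (Real.sqrt (2 * Real.pi))⁻¹ * ∫ x in Set.Iic t, Real.exp (-x ^ 2 / 2)

lemma integrable_exp_neg_sq_div_two : Integrable (fun x : ℝ => exp (-x ^ 2 / 2)) := by
  simpa [div_eq_inv_mul] using integrable_exp_neg_mul_sq (by norm_num : (0 : ℝ) < 2⁻¹)

lemma Phi_sub_Phi (a b : ℝ) :
    Phi a - Phi b = (√(2 * π))⁻¹ * ∫ x in b..a, exp (-x ^ 2 / 2) := by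
  rw [Phi, Phi, ← mul_sub, intervalIntegral.integral_Iic_sub_Iic
    integrable_exp_neg_sq_div_two.integrableOn integrable_exp_neg_sq_div_two.integrableOn]

lemma abs_Phi_sub_le {m a b : ℝ} (hm : 0 ≤ m) (ha : m ≤ a) (hb : m ≤ b) :
    |Phi a - Phi b| ≤ (√(2 * π))⁻¹ * (|a - b| * exp (-m ^ 2 / 2)) := by
  have density_le : ∀ x ∈ Set.uIoc b a, ‖exp (-x ^ 2 / 2)‖ ≤ exp (-m ^ 2 / 2) := by
    rintro x ⟨hx, -⟩
    have hmx : m ≤ x := (le_min hb ha).trans hx.le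
    rw [norm_of_nonneg (exp_pos _).le, exp_le_exp]
    nlinarith
  rw [Phi_sub_Phi, abs_mul, abs_of_pos (by positivity)]
  gcongr
  rw [mul_comm]
  exact intervalIntegral.norm_integral_le_of_norm_le_const density_le

lemma mul_exp_neg_sq_div_two_le (s : ℝ) : s * exp (-s ^ 2 / 2) ≤ exp (-(1 / 2)) := by
  have hs : s ≤ exp ((s ^ 2 - 1) / 2) := by
    nlinarith [add_one_le_exp ((s ^ 2 - 1) / 2), sq_nonneg (s - 1)]
  calc s * exp (-s ^ 2 / 2) ≤ exp ((s ^ 2 - 1) / 2) * exp (-s ^ 2 / 2) := by gcongr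
    _ = exp (-(1 / 2)) := by rw [← exp_add]; ring_nf

lemma sqrt_two_pi_mul_exp_one : √(2 * π * exp 1) = √(2 * π) * exp (1 / 2) := by
  rw [sqrt_mul (by positivity), exp_half]

theorem gaussian_shift_scale_bound_general (ε q : ℝ) (hε1 : ε < 1)
    (hq1 : 1 - ε ≤ q) (hq2 : q ≤ 1 + ε) (t₁ t₂ : ℝ) (ht₁ : 0 ≤ t₁) (ht₂ : 0 ≤ t₂) :
    |Phi (t₁ + q * t₂) - Phi (t₁ + t₂)| ≤
      ε / ((1 - ε) * Real.sqrt (2 * Real.pi * Real.exp 1)) := by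
  have hε : 0 < 1 - ε := by linarith
  set m := (1 - ε) * t₂ with hm_def
  have hm : 0 ≤ m := by positivity
  have hgap : |t₁ + q * t₂ - (t₁ + t₂)| ≤ ε / (1 - ε) * m :=
    calc |t₁ + q * t₂ - (t₁ + t₂)| = |q - 1| * t₂ := by
          rw [show t₁ + q * t₂ - (t₁ + t₂) = (q - 1) * t₂ by ring, abs_mul, abs_of_nonneg ht₂]
      _ ≤ ε * t₂ := by gcongr; exact abs_sub_le_iff.mpr ⟨by linarith, by linarith⟩
      _ = ε / (1 - ε) * m := by rw [hm_def]; field_simp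
  calc |Phi (t₁ + q * t₂) - Phi (t₁ + t₂)|
      ≤ (√(2 * π))⁻¹ * (|t₁ + q * t₂ - (t₁ + t₂)| * exp (-m ^ 2 / 2)) :=
        abs_Phi_sub_le hm (by nlinarith) (by nlinarith)
    _ ≤ (√(2 * π))⁻¹ * (ε / (1 - ε) * (m * exp (-m ^ 2 / 2))) := by
        rw [← mul_assoc (ε / (1 - ε))]; gcongr
    _ ≤ (√(2 * π))⁻¹ * (ε / (1 - ε) * exp (-(1 / 2))) := by
        have hε_nonneg : 0 ≤ ε := by linarith
        gcongr
        exact mul_exp_neg_sq_div_two_le m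
    _ = ε / ((1 - ε) * √(2 * π * exp 1)) := by
        rw [sqrt_two_pi_mul_exp_one, exp_neg]
        field_simp

/-- For `ε ∈ (0,1)`, `q ∈ [1−ε, 1+ε]` and `t₁, t₂ ≥ 0`,
`|Φ(t₁ + q t₂) − Φ(t₁ + t₂)| ≤ ε / ((1−ε) √(2πe))`. -/
theorem gaussian_shift_scale_bound (ε q : ℝ) (hε0 : 0 < ε) (hε1 : ε < 1)
    (hq1 : 1 - ε ≤ q) (hq2 : q ≤ 1 + ε) (t₁ t₂ : ℝ) (ht₁ : 0 ≤ t₁) (ht₂ : 0 ≤ t₂) :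
    |Phi (t₁ + q * t₂) - Phi (t₁ + t₂)| ≤
      ε / ((1 - ε) * Real.sqrt (2 * Real.pi * Real.exp 1)) :=
  gaussian_shift_scale_bound_general ε q hε1 hq1 hq2 t₁ t₂ ht₁ ht₂
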